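/- arXiv:0809.3869 — 4 statements merged into one kernel-verified Lean document; each statement's English description precedes it below -/
import Mathlib

section
/- Let γ > 0 and ρ < 0 with γ + ρ ≠ 0. Suppose U satisfies the second-order condition: lim_{t→∞} [((U(tx) − U(t))/a(t) − (x^γ − 1)/γ)/A(t)] = (x^{γ+ρ} − 1)/(γ+ρ) for all x > 0. Then for every x > 1, lim_{t→∞} [ (ln((U(tx) − U(t))/a(t)) − ln((x^γ − 1)/γ)) / A(t) ] = (γ/(γ+ρ)) · (x^{γ+ρ} − 1)/(x^γ − 1). -/
open Filter Topology Asymptotics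

/-!
Write `g t = (U (t x) - U t) / a t` and `c = (x ^ γ - 1) / γ > 0`. The second-order condition says
`(g t - c) / A t → (x ^ (γ + ρ) - 1) / (γ + ρ)`; since `A t → 0` this forces `g t → c` at the rate
of `A`, so a first-order Taylor expansion of `log` at `c` gives
`(log (g t) - log c) / A t → c⁻¹ * (x ^ (γ + ρ) - 1) / (γ + ρ)`, which is the claimed limit.
-/

theorem HasDerivAt.tendsto_sub_div {𝕜 α : Type*} [NontriviallyNormedField 𝕜] {l : Filter α}
    {f : 𝕜 → 𝕜} {f' c L : 𝕜} {u A : α → 𝕜} (hf : HasDerivAt f f' c)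
    (hA : Tendsto A l (𝓝 0)) (hA_ne : ∀ᶠ t in l, A t ≠ 0)
    (hu : Tendsto (fun t => (u t - c) / A t) l (𝓝 L)) :
    Tendsto (fun t => (f (u t) - f c) / A t) l (𝓝 (f' * L)) := by
  have hO : (fun t => u t - c) =O[l] A :=
    isBigO_of_div_tendsto_nhds (hA_ne.mono fun t ht h => absurd h ht) L hu
  have hu_c : Tendsto u l (𝓝 c) := tendsto_sub_nhds_zero_iff.mp (hO.trans_tendsto hA)
  have hrem : (fun t => f (u t) - f c - (u t - c) * f') =o[l] A :=
    (hf.isLittleO.comp_tendsto hu_c).trans_isBigO hO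
  have hlim := hrem.tendsto_div_nhds_zero.add (hu.mul_const f')
  rw [zero_add, mul_comm] at hlim
  exact hlim.congr fun t => by ring

theorem secondOrder_log_limit_general (U a A : ℝ → ℝ) (γ ρ : ℝ)
    (hγ : 0 < γ)
    (hA0 : Tendsto A atTop (𝓝 0))
    (hAne : ∀ᶠ t in atTop, A t ≠ 0)
    (h2 : ∀ x > (0:ℝ),
      Tendsto (fun t => ((U (t * x) - U t) / a t - (x ^ γ - 1) / γ) / A t)
        atTop (𝓝 ((x ^ (γ + ρ) - 1) / (γ + ρ)))) :
    ∀ x > (1:ℝ),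
      Tendsto
        (fun t => (Real.log ((U (t * x) - U t) / a t) - Real.log ((x ^ γ - 1) / γ)) / A t)
        atTop (𝓝 (γ / (γ + ρ) * ((x ^ (γ + ρ) - 1) / (x ^ γ - 1)))) := by
  intro x hx
  have hxγ : 1 < x ^ γ := Real.one_lt_rpow hx hγ
  have hc : (x ^ γ - 1) / γ ≠ 0 := (div_pos (by linarith) hγ).ne'
  have hlim := (Real.hasDerivAt_log hc).tendsto_sub_div hA0 hAne (h2 x (by linarith))
  convert hlim using 2
  field_simp

/-- Lemma 4.1, limit form, case γ+ρ ≠ 0.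
If `U` satisfies the second-order regular variation condition (1.4) with `γ > 0`, `ρ < 0`,
`γ + ρ ≠ 0`, then for every `x > 1` the log-version limit holds. -/
theorem secondOrder_log_limit (U a A : ℝ → ℝ) (γ ρ : ℝ)
    (hγ : 0 < γ) (hρ : ρ < 0) (hγρ : γ + ρ ≠ 0)
    (ha : ∀ t, 0 < a t)
    (hA0 : Tendsto A atTop (𝓝 0))
    (hAne : ∀ᶠ t in atTop, A t ≠ 0)
    (hArv : ∀ x > (0:ℝ), Tendsto (fun t => |A (t * x)| / |A t|) atTop (𝓝 (x ^ ρ)))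
    (h2 : ∀ x > (0:ℝ),
      Tendsto (fun t => ((U (t * x) - U t) / a t - (x ^ γ - 1) / γ) / A t)
        atTop (𝓝 ((x ^ (γ + ρ) - 1) / (γ + ρ)))) :
    ∀ x > (1:ℝ),
      Tendsto
        (fun t => (Real.log ((U (t * x) - U t) / a t) - Real.log ((x ^ γ - 1) / γ)) / A t)
        atTop (𝓝 (γ / (γ + ρ) * ((x ^ (γ + ρ) - 1) / (x ^ γ - 1)))) :=
  secondOrder_log_limit_general U a A γ ρ hγ hA0 hAne h2
end

section
/- Let γ > 0 and ρ < 0 with γ + ρ ≠ 0, and suppose U satisfies the second-order regular variation condition (1.4). Then for all x > 1 and y > 1, lim_{t→∞} [ ( ln((U(tx) − U(t))/(U(ty) − U(t))) − ln((x^γ − 1)/(y^γ − 1)) ) / A(t) ] = (γ/(γ+ρ)) [ (x^{γ+ρ} − 1)/(x^γ − 1) − (y^{γ+ρ} − 1)/(y^γ − 1) ]. -/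
/-!
Write `uₓ(t) = (U(tx) − U(t))/a(t)` and `cₓ = (x^γ − 1)/γ`. The second-order condition says
`uₓ(t) = cₓ + A(t) Ψ(x) + o(A(t))`, so by the first-order expansion of `log` at `cₓ ≠ 0`,
`log uₓ(t) − log cₓ = A(t) Ψ(x)/cₓ + o(A(t))`. The scale `a(t)` cancels in the ratio
`uₓ(t)/u_y(t)`, and subtracting the expansions at `x` and `y` gives the limit.
-/

open Filter Real Topology Asymptotics

section FirstOrder

variable {α : Type*} {l : Filter α} {u A : α → ℝ} {c L : ℝ}

theorem tendsto_of_tendsto_sub_div (hA0 : Tendsto A l (𝓝 0)) (hA : ∀ᶠ t in l, A t ≠ 0)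
    (h : Tendsto (fun t => (u t - c) / A t) l (𝓝 L)) : Tendsto u l (𝓝 c) := by
  have hprod : Tendsto (fun t => c + A t * ((u t - c) / A t)) l (𝓝 (c + 0 * L)) :=
    (hA0.mul h).const_add c
  rw [zero_mul, add_zero] at hprod
  refine hprod.congr' ?_
  filter_upwards [hA] with t ht
  field_simp
  ring

theorem HasDerivAt.tendsto_comp_sub_div {g : ℝ → ℝ} {g' : ℝ} (hg : HasDerivAt g g' c)
    (hu : Tendsto u l (𝓝 c)) (hA : ∀ᶠ t in l, A t ≠ 0)
    (h : Tendsto (fun t => (u t - c) / A t) l (𝓝 L)) :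
    Tendsto (fun t => (g (u t) - g c) / A t) l (𝓝 (g' * L)) := by
  have hbigO : (fun t => u t - c) =O[l] A :=
    isBigO_of_div_tendsto_nhds (hA.mono fun t ht h0 => absurd h0 ht) L h
  have hlittleO : (fun t => g (u t) - g c - (u t - c) * g') =o[l] A :=
    ((hasDerivAt_iff_isLittleO.mp hg).comp_tendsto hu).trans_isBigO hbigO
  have hsum := (h.const_mul g').add hlittleO.tendsto_div_nhds_zero
  rw [add_zero] at hsum
  refine hsum.congr fun t => ?_
  ring

end FirstOrder

theorem secondOrder_logRatio_limit_general (U a A : ℝ → ℝ) (γ ρ : ℝ)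
    (hγ : 0 < γ)
    (ha : ∀ t, 0 < a t)
    (hA0 : Tendsto A atTop (𝓝 0))
    (hAne : ∀ᶠ t in atTop, A t ≠ 0)
    (h2 : ∀ x > (0:ℝ),
      Tendsto (fun t => ((U (t * x) - U t) / a t - (x ^ γ - 1) / γ) / A t)
        atTop (𝓝 ((x ^ (γ + ρ) - 1) / (γ + ρ)))) :
    ∀ x > (1:ℝ), ∀ y > (1:ℝ),
      Tendsto
        (fun t => (Real.log ((U (t * x) - U t) / (U (t * y) - U t))
            - Real.log ((x ^ γ - 1) / (y ^ γ - 1))) / A t)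
        atTop
        (𝓝 (γ / (γ + ρ) *
          ((x ^ (γ + ρ) - 1) / (x ^ γ - 1) - (y ^ (γ + ρ) - 1) / (y ^ γ - 1)))) := by
  intro x hx y hy
  set u : ℝ → ℝ → ℝ := fun z t => (U (t * z) - U t) / a t
  set c : ℝ → ℝ := fun z => (z ^ γ - 1) / γ
  have hc : ∀ z > (1:ℝ), c z ≠ 0 := fun z hz =>
    div_ne_zero (sub_ne_zero.mpr (one_lt_rpow hz hγ).ne') hγ.ne'
  have hu : ∀ z > (1:ℝ), Tendsto (u z) atTop (𝓝 (c z)) := fun z hz =>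
    tendsto_of_tendsto_sub_div hA0 hAne (h2 z (by linarith))
  have hlog : ∀ z > (1:ℝ), Tendsto (fun t => (Real.log (u z t) - Real.log (c z)) / A t) atTop
      (𝓝 ((c z)⁻¹ * ((z ^ (γ + ρ) - 1) / (γ + ρ)))) := fun z hz =>
    (hasDerivAt_log (hc z hz)).tendsto_comp_sub_div (hu z hz) hAne (h2 z (by linarith))
  have hlimit : ∀ z, (c z)⁻¹ * ((z ^ (γ + ρ) - 1) / (γ + ρ))
      = γ / (γ + ρ) * ((z ^ (γ + ρ) - 1) / (z ^ γ - 1)) := fun z => by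
    simp only [c, inv_div, div_mul_div_comm, mul_comm]
  rw [mul_sub, ← hlimit, ← hlimit]
  refine ((hlog x hx).sub (hlog y hy)).congr' ?_
  filter_upwards [(hu x hx).eventually_ne (hc x hx), (hu y hy).eventually_ne (hc y hy)]
    with t hux huy
  have hratio : (U (t * x) - U t) / (U (t * y) - U t) = u x t / u y t :=
    (div_div_div_cancel_right₀ (ha t).ne' _ _).symm
  have hconst : (x ^ γ - 1) / (y ^ γ - 1) = c x / c y :=
    (div_div_div_cancel_right₀ hγ.ne' _ _).symm
  rw [hratio, hconst, Real.log_div hux huy, Real.log_div (hc x hx) (hc y hy)]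
  ring

/-- Lemma 4.2, limit form, case γ+ρ ≠ 0. -/
theorem secondOrder_logRatio_limit (U a A : ℝ → ℝ) (γ ρ : ℝ)
    (hγ : 0 < γ) (hρ : ρ < 0) (hγρ : γ + ρ ≠ 0)
    (ha : ∀ t, 0 < a t)
    (hA0 : Tendsto A atTop (𝓝 0))
    (hAne : ∀ᶠ t in atTop, A t ≠ 0)
    (hArv : ∀ x > (0:ℝ), Tendsto (fun t => |A (t * x)| / |A t|) atTop (𝓝 (x ^ ρ)))
    (h2 : ∀ x > (0:ℝ),
      Tendsto (fun t => ((U (t * x) - U t) / a t - (x ^ γ - 1) / γ) / A t)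
        atTop (𝓝 ((x ^ (γ + ρ) - 1) / (γ + ρ)))) :
    ∀ x > (1:ℝ), ∀ y > (1:ℝ),
      Tendsto
        (fun t => (Real.log ((U (t * x) - U t) / (U (t * y) - U t))
            - Real.log ((x ^ γ - 1) / (y ^ γ - 1))) / A t)
        atTop
        (𝓝 (γ / (γ + ρ) *
          ((x ^ (γ + ρ) - 1) / (x ^ γ - 1) - (y ^ (γ + ρ) - 1) / (y ^ γ - 1)))) :=
  secondOrder_logRatio_limit_general U a A γ ρ hγ ha hA0 hAne h2
end

section
/- Let Y be a standard Pareto random variable, i.e. with distribution function F_Y(y) = 1 − 1/y for y ≥ 1, and let α ≥ 1. Then Var[ (ln Y)^{2α}/(2Γ(2α+1)) − (ln Y)^{α−1}/Γ(α) ] = V_α, where V_α = (1/4){ Γ(4α)/(α Γ(2α)²) + 4Γ(2α−1)/Γ(α)² − 2Γ(3α)/(α Γ(α) Γ(2α)) − 1 }. -/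
open MeasureTheory Real Set

/-!
If `Y` is standard Pareto then `log Y` is a standard exponential variable (substitute `y = exp t`),
so `E[(log Y)^p] = ∫₀^∞ e^{-t} t^p dt = Γ(p + 1)`. Expanding the square, the first two moments of
`X = (log Y)^{2α}/(2Γ(2α+1)) − (log Y)^{α−1}/Γ(α)` are combinations of such Gamma values, and
`Γ(s + 1) = s Γ(s)` brings `E[X²] − E[X]²` to the form `V_α`; the final `−1/4` is `E[X]² = (1/2 − 1)²`.
-/

theorem integral_comp_log_mul_rpow_neg_two (g : ℝ → ℝ) :
    ∫ y in Ioi (1 : ℝ), g (log y) * y ^ (-2 : ℝ) = ∫ t in Ioi (0 : ℝ), exp (-t) * g t := by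
  rw [← log_one, ← integral_comp_log_Ioi _ one_pos]
  refine setIntegral_congr_fun measurableSet_Ioi fun y (hy : 1 < y) => ?_
  have hy0 : 0 < y := one_pos.trans hy
  rw [smul_eq_mul, exp_neg, exp_log hy0, rpow_neg hy0.le, rpow_two]
  field_simp

theorem integrableOn_exp_neg_mul_rpow {p : ℝ} (hp : -1 < p) :
    IntegrableOn (fun t => exp (-t) * t ^ p) (Ioi 0) := by
  simpa using GammaIntegral_convergent (s := p + 1) (by linarith)

theorem integral_exp_neg_mul_rpow_eq_Gamma {p : ℝ} (hp : -1 < p) :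
    ∫ t in Ioi (0 : ℝ), exp (-t) * t ^ p = Gamma (p + 1) := by
  simp [Gamma_eq_integral (s := p + 1) (by linarith)]

section

variable {p q : ℝ} (c d : ℝ)

theorem integral_exp_neg_mul_rpow_div_sub (hp : -1 < p) (hq : -1 < q) :
    ∫ t in Ioi (0 : ℝ), exp (-t) * (t ^ p / c - t ^ q / d)
      = Gamma (p + 1) / c - Gamma (q + 1) / d := by
  simp only [mul_sub, mul_div_assoc']
  rw [integral_sub ((integrableOn_exp_neg_mul_rpow hp).div_const c)
      ((integrableOn_exp_neg_mul_rpow hq).div_const d),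
    integral_div, integral_div, integral_exp_neg_mul_rpow_eq_Gamma hp,
    integral_exp_neg_mul_rpow_eq_Gamma hq]

theorem integral_exp_neg_mul_sq_rpow_div_sub (hp : -1 < 2 * p) (hq : -1 < 2 * q) :
    ∫ t in Ioi (0 : ℝ), exp (-t) * (t ^ p / c - t ^ q / d) ^ 2
      = Gamma (2 * p + 1) / c ^ 2 - 2 * Gamma (p + q + 1) / (c * d)
        + Gamma (2 * q + 1) / d ^ 2 := by
  have hpq : -1 < p + q := by linarith
  have expand : ∀ t ∈ Ioi (0 : ℝ), exp (-t) * (t ^ p / c - t ^ q / d) ^ 2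
      = exp (-t) * t ^ (2 * p) / c ^ 2 - 2 * (exp (-t) * t ^ (p + q)) / (c * d)
        + exp (-t) * t ^ (2 * q) / d ^ 2 := by
    intro t (ht : 0 < t)
    have hpp : t ^ (2 * p) = t ^ p * t ^ p := by rw [two_mul, rpow_add ht]
    have hqq : t ^ (2 * q) = t ^ q * t ^ q := by rw [two_mul, rpow_add ht]
    rw [hpp, hqq, rpow_add ht]
    ring
  have hp' := integrableOn_exp_neg_mul_rpow hp
  have hq' := integrableOn_exp_neg_mul_rpow hq
  have hpq' := integrableOn_exp_neg_mul_rpow hpq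
  rw [setIntegral_congr_fun measurableSet_Ioi expand, integral_add, integral_sub,
    integral_div, integral_div, integral_div, integral_const_mul,
    integral_exp_neg_mul_rpow_eq_Gamma hp, integral_exp_neg_mul_rpow_eq_Gamma hpq,
    integral_exp_neg_mul_rpow_eq_Gamma hq]
  · exact hp'.div_const _
  · exact (hpq'.const_mul 2).div_const _
  · exact (hp'.div_const _).sub ((hpq'.const_mul 2).div_const _)
  · exact hq'.div_const _

end

/-- For a standard Pareto random variable `Y` (density `y⁻²` on `[1,∞)`)
and `α ≥ 1`, the variance of `(ln Y)^{2α}/(2Γ(2α+1)) − (ln Y)^{α−1}/Γ(α)` equals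
`V_α = (1/4){Γ(4α)/(αΓ(2α)²) + 4Γ(2α−1)/Γ(α)² − 2Γ(3α)/(αΓ(α)Γ(2α)) − 1}`. -/
theorem pareto_variance_Valpha (α : ℝ) (hα : 1 ≤ α) :
    (∫ y in Set.Ioi (1:ℝ),
        ((Real.log y) ^ (2 * α) / (2 * Real.Gamma (2 * α + 1))
          - (Real.log y) ^ (α - 1) / Real.Gamma α) ^ 2 * y ^ (-2 : ℝ))
      - (∫ y in Set.Ioi (1:ℝ),
          ((Real.log y) ^ (2 * α) / (2 * Real.Gamma (2 * α + 1))
            - (Real.log y) ^ (α - 1) / Real.Gamma α) * y ^ (-2 : ℝ)) ^ 2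
      = (1 / 4) * (Real.Gamma (4 * α) / (α * (Real.Gamma (2 * α)) ^ 2)
          + 4 * Real.Gamma (2 * α - 1) / (Real.Gamma α) ^ 2
          - 2 * Real.Gamma (3 * α) / (α * Real.Gamma α * Real.Gamma (2 * α)) - 1) := by
  rw [integral_comp_log_mul_rpow_neg_two (fun t => (t ^ (2 * α) / (2 * Gamma (2 * α + 1))
      - t ^ (α - 1) / Gamma α) ^ 2),
    integral_comp_log_mul_rpow_neg_two (fun t => t ^ (2 * α) / (2 * Gamma (2 * α + 1))
      - t ^ (α - 1) / Gamma α),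
    integral_exp_neg_mul_sq_rpow_div_sub _ _ (by linarith) (by linarith),
    integral_exp_neg_mul_rpow_div_sub _ _ (by linarith) (by linarith)]
  have hα0 : 0 < α := by linarith
  rw [show 2 * (2 * α) + 1 = 4 * α + 1 by ring, show 2 * α + (α - 1) + 1 = 3 * α by ring,
    show 2 * (α - 1) + 1 = 2 * α - 1 by ring, sub_add_cancel,
    Gamma_add_one (by positivity : 4 * α ≠ 0), Gamma_add_one (by positivity : 2 * α ≠ 0)]
  have hΓα := (Gamma_pos_of_pos hα0).ne'
  have hΓ2α := (Gamma_pos_of_pos (by positivity : 0 < 2 * α)).ne'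
  field_simp
  ring
end

section
/- The function α₀(γ) = ln(1 + γ + √((1+γ)² − 1)) / ln(1+γ) is strictly decreasing on (0, ∞); moreover α₀(γ) → ∞ as γ → 0⁺ and α₀(γ) → 1 as γ → ∞. -/
/-!
Put `s = arcosh (1 + γ)`, so that `1 + γ = cosh s` and `α₀(γ) = s / log (cosh s)`, with
`s` increasing from `0` to `∞` along with `γ`. For `0 < λ < 1`, strict concavity of `x ↦ x ^ λ`
gives `cosh (λ t) < (cosh t) ^ λ`: the slope `log (cosh s) / s` is strictly increasing, so `α₀`
strictly decreases. The limits follow from `log (cosh s) ≤ s ^ 2 / 2` near `0` and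
`s - log 2 ≤ log (cosh s) ≤ s` near `∞`.
-/

open Real Filter Topology Set

/-- Strict concavity of `x ↦ x ^ l`, applied to the midpoint of `exp t` and `exp (-t)`. -/
lemma cosh_mul_lt_cosh_rpow {l t : ℝ} (hl0 : 0 < l) (hl1 : l < 1) (ht : t ≠ 0) :
    cosh (l * t) < cosh t ^ l := by
  have hne : exp t ≠ exp (-t) := fun h => ht (by linarith [exp_injective h])
  have key := (strictConcaveOn_rpow hl0 hl1).2 (exp_pos t).le (exp_pos (-t)).le hne
    (by norm_num : (0 : ℝ) < 1 / 2) (by norm_num : (0 : ℝ) < 1 / 2) (by norm_num)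
  simp only [smul_eq_mul, ← exp_mul] at key
  calc cosh (l * t) = 1 / 2 * exp (t * l) + 1 / 2 * exp (-t * l) := by rw [cosh_eq]; ring_nf
    _ < (1 / 2 * exp t + 1 / 2 * exp (-t)) ^ l := key
    _ = cosh t ^ l := by rw [cosh_eq]; ring_nf

lemma log_cosh_div_lt_log_cosh_div {s t : ℝ} (hs : 0 < s) (hst : s < t) :
    log (cosh s) / s < log (cosh t) / t := by
  have ht : 0 < t := hs.trans hst
  have hcosh : cosh s < cosh t ^ (s / t) := by
    simpa [div_mul_cancel₀ s ht.ne'] using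
      cosh_mul_lt_cosh_rpow (div_pos hs ht) ((div_lt_one ht).2 hst) ht.ne'
  have hlog : log (cosh s) < s / t * log (cosh t) := by
    rw [← log_rpow (cosh_pos t)]
    exact log_lt_log (cosh_pos s) hcosh
  rw [div_lt_div_iff₀ hs ht]
  calc log (cosh s) * t < s / t * log (cosh t) * t := mul_lt_mul_of_pos_right hlog ht
    _ = log (cosh t) * s := by field_simp

lemma log_cosh_pos {s : ℝ} (hs : s ≠ 0) : 0 < log (cosh s) :=
  log_pos (one_lt_cosh.2 hs)

lemma strictAntiOn_div_log_cosh : StrictAntiOn (fun s => s / log (cosh s)) (Ioi 0) := by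
  intro s hs t ht hst
  have hs' : 0 < log (cosh s) := log_cosh_pos (ne_of_gt hs)
  have ht' : 0 < log (cosh t) := log_cosh_pos (ne_of_gt ht)
  simpa only [inv_div] using
    inv_strictAntiOn (div_pos hs' hs) (div_pos ht' ht) (log_cosh_div_lt_log_cosh_div hs hst)

lemma tendsto_div_log_cosh_nhdsGT_zero :
    Tendsto (fun s => s / log (cosh s)) (𝓝[>] 0) atTop := by
  refine tendsto_atTop_mono' _ ?_ (tendsto_inv_nhdsGT_zero.const_mul_atTop two_pos)
  filter_upwards [self_mem_nhdsWithin] with s (hs : 0 < s)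
  have hlog : log (cosh s) ≤ s ^ 2 / 2 := by
    simpa using log_le_log (cosh_pos s) (cosh_le_exp_half_sq s)
  calc 2 * s⁻¹ = s / (s ^ 2 / 2) := by field_simp
    _ ≤ s / log (cosh s) := div_le_div_of_nonneg_left hs.le (log_cosh_pos hs.ne') hlog

lemma sub_log_two_le_log_cosh (s : ℝ) : s - log 2 ≤ log (cosh s) := by
  have : exp s / 2 ≤ cosh s := by rw [cosh_eq]; gcongr; linarith [exp_pos (-s)]
  simpa [log_div (exp_pos s).ne' two_ne_zero] using log_le_log (by positivity) this

lemma log_cosh_le {s : ℝ} (hs : 0 ≤ s) : log (cosh s) ≤ s := by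
  have : cosh s ≤ exp s := by
    rw [cosh_eq]; linarith [exp_le_exp.2 (show -s ≤ s by linarith)]
  simpa using log_le_log (cosh_pos s) this

lemma tendsto_log_cosh_div_atTop : Tendsto (fun s => log (cosh s) / s) atTop (𝓝 1) := by
  have hlower : Tendsto (fun s : ℝ => 1 - log 2 / s) atTop (𝓝 1) := by
    simpa using (tendsto_const_nhds (x := (1 : ℝ))).sub
      (tendsto_const_nhds.div_atTop tendsto_id)
  refine tendsto_of_tendsto_of_tendsto_of_le_of_le' hlower tendsto_const_nhds ?_ ?_
  all_goals filter_upwards [eventually_gt_atTop 0] with s hs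
  · rw [one_sub_div hs.ne']
    exact div_le_div_of_nonneg_right (sub_log_two_le_log_cosh s) hs.le
  · exact (div_le_one hs).2 (log_cosh_le hs.le)

lemma tendsto_div_log_cosh_atTop : Tendsto (fun s => s / log (cosh s)) atTop (𝓝 1) := by
  simpa only [inv_div, inv_one] using tendsto_log_cosh_div_atTop.inv₀ one_ne_zero

lemma log_le_arcosh {x : ℝ} (hx : 1 ≤ x) : log x ≤ arcosh x :=
  log_le_log (by linarith) (le_add_of_nonneg_right (sqrt_nonneg _))

lemma tendsto_arcosh_atTop : Tendsto arcosh atTop atTop :=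
  tendsto_atTop_mono' _ ((eventually_ge_atTop 1).mono fun _ => log_le_arcosh) tendsto_log_atTop

lemma tendsto_arcosh_one_add_nhdsGT_zero :
    Tendsto (fun γ => arcosh (1 + γ)) (𝓝[>] 0) (𝓝[>] 0) := by
  refine tendsto_nhdsWithin_iff.2 ⟨?_, ?_⟩
  · have : ContinuousAt (fun γ : ℝ => arcosh (1 + γ)) 0 := by
      unfold arcosh; fun_prop (disch := norm_num)
    simpa [arcosh_zero] using this.tendsto.mono_left nhdsWithin_le_nhds
  · filter_upwards [self_mem_nhdsWithin] with γ (hγ : 0 < γ) using arcosh_pos (by linarith)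

/-- `α₀(γ)`: Mathlib's `arcosh x` is `log (x + √(x ^ 2 - 1))`, the numerator of `α₀`. -/
noncomputable def alphaZero (γ : ℝ) : ℝ := arcosh (1 + γ) / log (1 + γ)

lemma alphaZero_eq_div_log_cosh_arcosh {γ : ℝ} (hγ : 0 ≤ γ) :
    alphaZero γ = arcosh (1 + γ) / log (cosh (arcosh (1 + γ))) := by
  rw [alphaZero, cosh_arcosh (by linarith)]

lemma strictAntiOn_alphaZero : StrictAntiOn alphaZero (Ioi 0) := by
  have hmono : StrictMonoOn (fun γ => arcosh (1 + γ)) (Ioi 0) := fun a (ha : 0 < a) b _ hab =>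
    (arcosh_lt_arcosh (by linarith) (by linarith)).2 (by linarith)
  refine (strictAntiOn_div_log_cosh.comp_strictMonoOn hmono ?_).congr ?_
  · exact fun γ (hγ : 0 < γ) => arcosh_pos (by linarith)
  · exact fun γ (hγ : 0 < γ) => (alphaZero_eq_div_log_cosh_arcosh hγ.le).symm

lemma tendsto_alphaZero_nhdsGT_zero : Tendsto alphaZero (𝓝[>] 0) atTop := by
  refine (tendsto_div_log_cosh_nhdsGT_zero.comp tendsto_arcosh_one_add_nhdsGT_zero).congr' ?_
  filter_upwards [self_mem_nhdsWithin] with γ (hγ : 0 < γ)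
  exact (alphaZero_eq_div_log_cosh_arcosh hγ.le).symm

lemma tendsto_alphaZero_atTop : Tendsto alphaZero atTop (𝓝 1) := by
  have harcosh : Tendsto (fun γ => arcosh (1 + γ)) atTop atTop :=
    tendsto_arcosh_atTop.comp (tendsto_atTop_add_const_left _ 1 tendsto_id)
  refine (tendsto_div_log_cosh_atTop.comp harcosh).congr' ?_
  filter_upwards [eventually_ge_atTop 0] with γ hγ
  exact (alphaZero_eq_div_log_cosh_arcosh hγ).symm

/-- The function
`α₀(γ) = ln(1 + γ + √((1+γ)² − 1))/ln(1+γ)` is strictly decreasing on `(0,∞)`,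
tends to `∞` as `γ → 0⁺` and tends to `1` as `γ → ∞`. -/
theorem alphaZero_strictAnti_and_limits :
    StrictAntiOn
        (fun γ : ℝ => Real.log (1 + γ + Real.sqrt ((1 + γ) ^ 2 - 1)) / Real.log (1 + γ))
        (Set.Ioi 0) ∧
      Tendsto (fun γ : ℝ => Real.log (1 + γ + Real.sqrt ((1 + γ) ^ 2 - 1)) / Real.log (1 + γ))
        (𝓝[>] 0) atTop ∧
      Tendsto (fun γ : ℝ => Real.log (1 + γ + Real.sqrt ((1 + γ) ^ 2 - 1)) / Real.log (1 + γ))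
        atTop (𝓝 1) :=
  ⟨strictAntiOn_alphaZero, tendsto_alphaZero_nhdsGT_zero, tendsto_alphaZero_atTop⟩
end
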